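/- arXiv:1804.09050 — 3 statements merged into one kernel-verified Lean document; each statement's English description precedes it below -/
import Mathlib

section
/- Let d ≥ 1, η ∈ (0, 1], and let k > 1 + d/(2η) be real; set α₀ = (2ηk − d − 2η)/(dk) and q* = 2(d + 2η)/d. Let T > 0, let 𝒪 ⊆ ℝ^d be open, and write Q = [0,T] × 𝒪 with Lebesgue measure. Let f, v : Q → ℝ be measurable, λ > 0, and m ≥ 1 an integer. With T_m(v) = max(v − λ(1 − 2^{−m}), 0), the following inequality holds in [0, ∞]: ∫_Q |f| · T_m(v) ≤ (2^m/λ)^{1+2α₀} · ‖f‖_{L^k(Q)} · ‖T_{m−1}(v)‖_{L^{q*}(Q)}^{2+2α₀}. -/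
open MeasureTheory

/-- De Giorgi truncation: `T_m(v) = max (v - λ(1 - 2^{-m})) 0`. -/
noncomputable def deGiorgiTrunc (lam : ℝ) (m : ℕ) (v : ℝ) : ℝ :=
  max (v - lam * (1 - (1 / 2 : ℝ) ^ m)) 0

/-- `α₀ = (2ηk - d - 2η)/(dk)`. -/
noncomputable def alphaZero (d : ℕ) (η k : ℝ) : ℝ :=
  (2 * η * k - d - 2 * η) / (d * k)

/-- `q* = 2(d + 2η)/d`. -/
noncomputable def qStar (d : ℕ) (η : ℝ) : ℝ :=
  2 * (d + 2 * η) / d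

lemma deGiorgiTrunc_def' (lam : ℝ) (m : ℕ) (x : ℝ) :
    deGiorgiTrunc lam m x = max (x - lam * (1 - (1 / 2 : ℝ) ^ m)) 0 := rfl

lemma alphaZero_def' (d : ℕ) (η k : ℝ) :
    alphaZero d η k = (2 * η * k - d - 2 * η) / (d * k) := rfl

lemma qStar_def' (d : ℕ) (η : ℝ) : qStar d η = 2 * (d + 2 * η) / d := rfl

lemma deGiorgiTrunc_nonneg (lam : ℝ) (m : ℕ) (x : ℝ) : 0 ≤ deGiorgiTrunc lam m x :=
  le_max_right _ _

/-- The key pointwise inequality. -/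
lemma deGiorgiTrunc_pointwise {lam : ℝ} (hlam : 0 < lam) {m : ℕ} (hm : 1 ≤ m)
    {P : ℝ} (hP : 0 ≤ P) (x : ℝ) :
    deGiorgiTrunc lam m x ≤ ((2 : ℝ) ^ m / lam) ^ P * deGiorgiTrunc lam (m - 1) x ^ (P + 1) := by
  obtain ⟨n, rfl⟩ : ∃ n, m = n + 1 := ⟨m - 1, (Nat.succ_pred_eq_of_pos hm).symm⟩
  simp only [Nat.add_sub_cancel]
  have hpow : (1 / 2 : ℝ) ^ (n + 1) = (1 / 2) ^ n * (1 / 2) := pow_succ _ _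
  have hs : (0 : ℝ) < (1 / 2 : ℝ) ^ (n + 1) := by positivity
  have hcc : lam * (1 - (1 / 2 : ℝ) ^ (n + 1)) - lam * (1 - (1 / 2 : ℝ) ^ n) =
      lam * (1 / 2) ^ (n + 1) := by rw [hpow]; ring
  by_cases hx : x ≤ lam * (1 - (1 / 2 : ℝ) ^ (n + 1))
  · have h0 : deGiorgiTrunc lam (n + 1) x = 0 := by
      rw [deGiorgiTrunc_def', max_eq_right (by linarith)]
    rw [h0]
    have := deGiorgiTrunc_nonneg lam n x
    positivity
  · push_neg at hx
    have hclt : lam * (1 - (1 / 2 : ℝ) ^ n) < lam * (1 - (1 / 2 : ℝ) ^ (n + 1)) := by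
      nlinarith
    have hT : deGiorgiTrunc lam (n + 1) x = x - lam * (1 - (1 / 2 : ℝ) ^ (n + 1)) := by
      rw [deGiorgiTrunc_def', max_eq_left (by linarith)]
    have hT' : deGiorgiTrunc lam n x = x - lam * (1 - (1 / 2 : ℝ) ^ n) := by
      rw [deGiorgiTrunc_def', max_eq_left (by linarith)]
    set t : ℝ := x - lam * (1 - (1 / 2 : ℝ) ^ n) with ht_def
    have ht_lb : lam * (1 / 2) ^ (n + 1) ≤ t := by rw [ht_def]; linarith
    have ht0 : 0 < t := lt_of_lt_of_le (by positivity) ht_lb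
    have h2 : (2 : ℝ) ^ (n + 1) * (1 / 2) ^ (n + 1) = 1 := by
      rw [one_div, inv_pow, mul_inv_cancel₀ (by positivity)]
    have hmul : (2 : ℝ) ^ (n + 1) / lam * (lam * (1 / 2) ^ (n + 1)) = 1 := by
      field_simp
      exact h2
    have h1 : 1 ≤ (2 : ℝ) ^ (n + 1) / lam * t := by
      rw [← hmul]
      exact mul_le_mul_of_nonneg_left ht_lb (by positivity)
    have hone : (1 : ℝ) ≤ ((2 : ℝ) ^ (n + 1) / lam * t) ^ P := Real.one_le_rpow h1 hP
    rw [hT, hT']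
    calc x - lam * (1 - (1 / 2 : ℝ) ^ (n + 1)) ≤ t := by rw [ht_def]; linarith
      _ = 1 * t := (one_mul t).symm
      _ ≤ ((2 : ℝ) ^ (n + 1) / lam * t) ^ P * t := mul_le_mul_of_nonneg_right hone ht0.le
      _ = ((2 : ℝ) ^ (n + 1) / lam) ^ P * t ^ (P + 1) := by
          rw [Real.mul_rpow (by positivity) ht0.le, Real.rpow_add_one ht0.ne']
          ring

theorem deGiorgi_source_term_estimate (d : ℕ) (hd : 1 ≤ d)
    (η : ℝ) (hη0 : 0 < η) (hη1 : η ≤ 1)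
    (k : ℝ) (hk : 1 + d / (2 * η) < k)
    (T : ℝ) (hT : 0 < T) (O : Set (Fin d → ℝ)) (hO : IsOpen O)
    (f v : ℝ × (Fin d → ℝ) → ℝ) (hf : Measurable f) (hv : Measurable v)
    (lam : ℝ) (hlam : 0 < lam) (m : ℕ) (hm : 1 ≤ m) :
    ∫⁻ p in Set.Icc (0 : ℝ) T ×ˢ O, ENNReal.ofReal (|f p| * deGiorgiTrunc lam m (v p)) ≤
      ENNReal.ofReal (((2 : ℝ) ^ m / lam) ^ (1 + 2 * alphaZero d η k)) *
        eLpNorm f (ENNReal.ofReal k) (volume.restrict (Set.Icc (0 : ℝ) T ×ˢ O)) *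
        (eLpNorm (fun p => deGiorgiTrunc lam (m - 1) (v p)) (ENNReal.ofReal (qStar d η))
            (volume.restrict (Set.Icc (0 : ℝ) T ×ˢ O))) ^ (2 + 2 * alphaZero d η k) := by
  set μ := volume.restrict (Set.Icc (0 : ℝ) T ×ˢ O) with hμ
  have hd0 : (0 : ℝ) < d := by exact_mod_cast Nat.lt_of_lt_of_le Nat.zero_lt_one hd
  have h2η : (0 : ℝ) < 2 * η := by linarith
  have hdη : 0 < (d : ℝ) / (2 * η) := div_pos hd0 h2η
  have hk1 : 1 < k := by linarith
  have hk0 : 0 < k := by linarith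
  have hnum : 2 * η + (d : ℝ) < 2 * η * k := by
    have h := (div_lt_iff₀ h2η).mp (by linarith : (d : ℝ) / (2 * η) < k - 1)
    nlinarith
  have ha : 0 < alphaZero d η k := by
    rw [alphaZero_def']
    exact div_pos (by linarith) (mul_pos hd0 hk0)
  set a := alphaZero d η k with ha_def
  set q := qStar d η with hq_def
  have hq0 : 0 < q := by rw [hq_def, qStar_def']; positivity
  set k' := Real.conjExponent k with hk'_def
  have hconj : k.HolderConjugate k' := Real.HolderConjugate.conjExponent hk1
  have hk'eq : k' = k / (k - 1) := rfl
  have hk'0 : 0 < k' := hconj.symm.pos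
  set E : ℝ := 2 + 2 * a with hE_def
  have hE0 : 0 < E := by linarith
  have hkey : E * k' = q := by
    rw [hE_def, hk'eq, ha_def, hq_def, alphaZero_def', qStar_def']
    have h1 : (d : ℝ) ≠ 0 := hd0.ne'
    have h2 : k ≠ 0 := hk0.ne'
    have h3 : k - 1 ≠ 0 := by linarith
    field_simp
    ring
  -- the functions for Hölder
  set F : ℝ × (Fin d → ℝ) → ENNReal := fun p => ENNReal.ofReal |f p| with hF_def
  set G : ℝ × (Fin d → ℝ) → ENNReal :=
    fun p => ENNReal.ofReal (deGiorgiTrunc lam (m - 1) (v p)) ^ E with hG_def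
  have hg_meas : Measurable fun p => deGiorgiTrunc lam (m - 1) (v p) := by
    have h1 : Measurable fun p => v p - lam * (1 - (1 / 2 : ℝ) ^ (m - 1)) := hv.sub_const _
    exact h1.max measurable_const
  have hF_meas : Measurable F := hf.abs.ennreal_ofReal
  have hG_meas : Measurable G :=
    ENNReal.continuous_rpow_const.measurable.comp hg_meas.ennreal_ofReal
  set C : ENNReal := ENNReal.ofReal (((2 : ℝ) ^ m / lam) ^ (1 + 2 * a)) with hC_def
  -- pointwise bound
  have hpt : ∀ p, ENNReal.ofReal (|f p| * deGiorgiTrunc lam m (v p)) ≤ C * (F p * G p) := by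
    intro p
    rw [hC_def, hF_def, hG_def]
    simp only
    rw [ENNReal.ofReal_rpow_of_nonneg (deGiorgiTrunc_nonneg _ _ _) hE0.le,
      ← ENNReal.ofReal_mul (abs_nonneg _), ← ENNReal.ofReal_mul (by positivity)]
    refine ENNReal.ofReal_le_ofReal ?_
    have h1 : deGiorgiTrunc lam m (v p) ≤
        ((2 : ℝ) ^ m / lam) ^ (1 + 2 * a) * deGiorgiTrunc lam (m - 1) (v p) ^ ((1 + 2 * a) + 1) :=
      deGiorgiTrunc_pointwise hlam hm (by linarith) (v p)
    have hEeq : (1 + 2 * a) + 1 = E := by rw [hE_def]; ring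
    rw [hEeq] at h1
    calc |f p| * deGiorgiTrunc lam m (v p)
        ≤ |f p| * (((2 : ℝ) ^ m / lam) ^ (1 + 2 * a) * deGiorgiTrunc lam (m - 1) (v p) ^ E) :=
          mul_le_mul_of_nonneg_left h1 (abs_nonneg _)
      _ = ((2 : ℝ) ^ m / lam) ^ (1 + 2 * a) * (|f p| * deGiorgiTrunc lam (m - 1) (v p) ^ E) := by
          ring
  -- Hölder
  have hholder := ENNReal.lintegral_mul_le_Lp_mul_Lq μ hconj hF_meas.aemeasurable
    hG_meas.aemeasurable
  -- identify the two Lp factors with eLpNorms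
  have hfk : (∫⁻ p, F p ^ k ∂μ) ^ (1 / k) = eLpNorm f (ENNReal.ofReal k) μ := by
    rw [eLpNorm_eq_lintegral_rpow_enorm_toReal (by simpa using hk0) ENNReal.ofReal_ne_top,
      ENNReal.toReal_ofReal hk0.le]
    congr 1
    refine lintegral_congr fun p => ?_
    rw [hF_def, Real.enorm_eq_ofReal_abs]
  have hgq : (∫⁻ p, G p ^ k' ∂μ) ^ (1 / k') =
      (eLpNorm (fun p => deGiorgiTrunc lam (m - 1) (v p)) (ENNReal.ofReal q) μ) ^ E := by
    have hGk' : ∀ p, G p ^ k' = ENNReal.ofReal (deGiorgiTrunc lam (m - 1) (v p)) ^ q := by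
      intro p
      rw [hG_def]
      simp only
      rw [← ENNReal.rpow_mul, hkey]
    rw [lintegral_congr hGk',
      eLpNorm_eq_lintegral_rpow_enorm_toReal (by simpa using hq0) ENNReal.ofReal_ne_top,
      ENNReal.toReal_ofReal hq0.le]
    have hnorm : ∀ p, ((‖deGiorgiTrunc lam (m - 1) (v p)‖ₑ : ENNReal)) ^ q =
        ENNReal.ofReal (deGiorgiTrunc lam (m - 1) (v p)) ^ q := by
      intro p
      rw [Real.enorm_eq_ofReal_abs, abs_of_nonneg (deGiorgiTrunc_nonneg _ _ _)]
    rw [lintegral_congr hnorm, ← ENNReal.rpow_mul]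
    congr 1
    have hq0' : q ≠ 0 := hq0.ne'
    have hk'0' : k' ≠ 0 := hk'0.ne'
    field_simp
    nlinarith [hkey]
  calc ∫⁻ p, ENNReal.ofReal (|f p| * deGiorgiTrunc lam m (v p)) ∂μ
      ≤ ∫⁻ p, C * (F p * G p) ∂μ := lintegral_mono hpt
    _ = C * ∫⁻ p, (F * G) p ∂μ := by
        rw [lintegral_const_mul' _ _ ENNReal.ofReal_ne_top]; rfl
    _ ≤ C * ((∫⁻ p, F p ^ k ∂μ) ^ (1 / k) * (∫⁻ p, G p ^ k' ∂μ) ^ (1 / k')) :=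
        mul_le_mul_right hholder C
    _ = C * eLpNorm f (ENNReal.ofReal k) μ *
        (eLpNorm (fun p => deGiorgiTrunc lam (m - 1) (v p)) (ENNReal.ofReal q) μ) ^ E := by
        rw [hfk, hgq, mul_assoc]
end

section
/- Let d ≥ 1, η ∈ (0, 1], and let k > 1 + d/(2η) be real; set α₀ = (2ηk − d − 2η)/(dk) and q* = 2(d + 2η)/d. Let T > 0, let 𝒪 ⊆ ℝ^d be open, and write Q = [0,T] × 𝒪 with Lebesgue measure. Let v : Q → ℝ and h : Q → [0, ∞) be measurable, λ > 0, and m ≥ 1 an integer. With T_m(v) = max(v − λ(1 − 2^{−m}), 0), the following inequality holds in [0, ∞]: ∫_Q 1_{{T_m(v) > 0}} · h² ≤ (2^m/λ)^{2+2α₀} · ‖h‖²_{L^{2k}(Q)} · ‖T_{m−1}(v)‖_{L^{q*}(Q)}^{2+2α₀}. -/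
open MeasureTheory

theorem deGiorgi_noise_term_estimate (d : ℕ) (hd : 1 ≤ d)
    (η : ℝ) (hη0 : 0 < η) (hη1 : η ≤ 1)
    (k : ℝ) (hk : 1 + d / (2 * η) < k)
    (T : ℝ) (hT : 0 < T) (O : Set (Fin d → ℝ)) (hO : IsOpen O)
    (v h : ℝ × (Fin d → ℝ) → ℝ) (hv : Measurable v) (hh : Measurable h)
    (hh0 : ∀ p, 0 ≤ h p)
    (lam : ℝ) (hlam : 0 < lam) (m : ℕ) (hm : 1 ≤ m) :
    ∫⁻ p in Set.Icc (0 : ℝ) T ×ˢ O,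
        (if 0 < deGiorgiTrunc lam m (v p) then ENNReal.ofReal (h p ^ 2) else 0) ≤
      ENNReal.ofReal (((2 : ℝ) ^ m / lam) ^ (2 + 2 * alphaZero d η k)) *
        (eLpNorm h (ENNReal.ofReal (2 * k)) (volume.restrict (Set.Icc (0 : ℝ) T ×ˢ O))) ^ (2 : ℝ) *
        (eLpNorm (fun p => deGiorgiTrunc lam (m - 1) (v p)) (ENNReal.ofReal (qStar d η))
            (volume.restrict (Set.Icc (0 : ℝ) T ×ˢ O))) ^ (2 + 2 * alphaZero d η k) := by
  classical
  set μ := volume.restrict (Set.Icc (0 : ℝ) T ×ˢ O) with hμdef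
  -- basic numeric facts
  have hd0 : (0 : ℝ) < d := by exact_mod_cast Nat.lt_of_lt_of_le Nat.zero_lt_one hd
  have hk1 : (1 : ℝ) < k := by
    have : 0 < (d : ℝ) / (2 * η) := by positivity
    linarith
  have hk0 : (0 : ℝ) < k := by linarith
  have hqs0 : 0 < qStar d η := by unfold qStar; positivity
  have hα : 0 < alphaZero d η k := by
    unfold alphaZero
    apply div_pos _ (by positivity)
    have h1 : (d : ℝ) / (2 * η) < k - 1 := by linarith
    have h2 : (d : ℝ) < (k - 1) * (2 * η) := (div_lt_iff₀ (by positivity)).mp h1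
    nlinarith
  set e := 2 + 2 * alphaZero d η k with hedef
  have he0 : 0 < e := by positivity
  have hkey : qStar d η * ((k - 1) / k) = e := by
    rw [hedef]; unfold qStar alphaZero
    field_simp
    ring
  set c : ℝ := lam * (1 / 2 : ℝ) ^ m with hcdef
  have hc0 : 0 < c := by positivity
  -- level-set inclusion
  have hstep : ∀ x : ℝ, 0 < deGiorgiTrunc lam m x → c ≤ deGiorgiTrunc lam (m - 1) x := by
    intro x hx
    obtain ⟨n, rfl⟩ := Nat.exists_eq_add_of_le hm
    have hx' : lam * (1 - (1 / 2 : ℝ) ^ (1 + n)) < x := by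
      rcases lt_max_iff.mp hx with h1 | h1
      · linarith
      · exact absurd h1 (lt_irrefl 0)
    have hm1 : 1 + n - 1 = n := by omega
    rw [hm1]
    have hpow : (1 / 2 : ℝ) ^ (1 + n) = (1 / 2) * (1 / 2) ^ n := by
      rw [pow_add, pow_one]
    refine le_max_of_le_left ?_
    set t : ℝ := lam * (1 / 2 : ℝ) ^ n with htdef
    have hct : c = (1 / 2) * t := by
      rw [hcdef, htdef, hpow]; ring
    have hx'' : lam - (1 / 2) * t < x := by
      rw [htdef] at *
      calc lam - 1 / 2 * (lam * (1 / 2 : ℝ) ^ n)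
          = lam * (1 - (1 / 2 : ℝ) ^ (1 + n)) := by rw [hpow]; ring
        _ < x := hx'
    rw [hct]
    have : lam * (1 - (1 / 2 : ℝ) ^ n) = lam - t := by rw [htdef]; ring
    rw [this]
    linarith
  -- measurability
  have hTm : Measurable fun p => deGiorgiTrunc lam m (v p) := by
    unfold deGiorgiTrunc
    exact (hv.sub measurable_const).max measurable_const
  set A : Set (ℝ × (Fin d → ℝ)) := {p | 0 < deGiorgiTrunc lam m (v p)} with hAdef
  have hA : MeasurableSet A := by
    have : A = (fun p => deGiorgiTrunc lam m (v p)) ⁻¹' Set.Ioi 0 := rfl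
    rw [this]; exact hTm measurableSet_Ioi
  set f : ℝ × (Fin d → ℝ) → ENNReal := A.indicator fun _ => (1 : ENNReal) with hfdef
  set g : ℝ × (Fin d → ℝ) → ENNReal := fun p => ENNReal.ofReal (h p ^ 2) with hgdef
  have hfg : ∀ p, (if 0 < deGiorgiTrunc lam m (v p) then ENNReal.ofReal (h p ^ 2) else 0)
      = (f * g) p := by
    intro p
    simp only [hfdef, hgdef, Set.indicator_apply, Pi.mul_apply, hAdef, Set.mem_setOf_eq]
    split_ifs <;> simp
  -- Hölder
  have hγ : (k / (k - 1)).HolderConjugate k := by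
    rw [Real.holderConjugate_iff]
    constructor
    · rw [lt_div_iff₀ (by linarith : (0:ℝ) < k - 1)]; linarith
    · rw [inv_div]
      field_simp
      ring
  have hfmeas : AEMeasurable f μ := (measurable_const.indicator hA).aemeasurable
  have hgmeas : AEMeasurable g μ := (ENNReal.measurable_ofReal.comp (hh.pow_const 2)).aemeasurable
  have holder := ENNReal.lintegral_mul_le_Lp_mul_Lq μ hγ hfmeas hgmeas
  -- simplify the first Hölder factor
  have hγpos : 0 < k / (k - 1) := div_pos hk0 (by linarith)
  have hfpow : ∀ p, f p ^ (k / (k - 1)) = f p := by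
    intro p
    by_cases hp : p ∈ A
    · simp [hfdef, hp]
    · simp [hfdef, hp, ENNReal.zero_rpow_of_pos hγpos]
  have hintf : (∫⁻ p, f p ^ (k / (k - 1)) ∂μ) = μ A := by
    simp_rw [hfpow]
    exact lintegral_indicator_one hA
  have hinv : 1 / (k / (k - 1)) = (k - 1) / k := one_div_div _ _
  -- simplify the second Hölder factor
  have hgpow : ∀ p, g p ^ k = (‖h p‖₊ : ENNReal) ^ (2 * k) := by
    intro p
    have h1 : g p = (‖h p‖₊ : ENNReal) ^ (2 : ℝ) := by
      rw [hgdef]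
      rw [← enorm_eq_nnnorm, Real.enorm_eq_ofReal (hh0 p),
        show ((2 : ℝ)) = ((2 : ℕ) : ℝ) by norm_num, ENNReal.rpow_natCast]
      exact ENNReal.ofReal_pow (hh0 p) 2
    rw [h1, ← ENNReal.rpow_mul]
  have h2k0 : (0:ℝ) < 2 * k := by linarith
  have hP2 : (ENNReal.ofReal (2 * k)).toReal = 2 * k := ENNReal.toReal_ofReal h2k0.le
  have hX : (∫⁻ p, g p ^ k ∂μ) ^ (1 / k)
      = (eLpNorm h (ENNReal.ofReal (2 * k)) μ) ^ (2 : ℝ) := by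
    rw [eLpNorm_eq_lintegral_rpow_enorm_toReal (by simp [h2k0, hk0]) ENNReal.ofReal_ne_top, hP2]
    simp only [enorm_eq_nnnorm]
    simp_rw [hgpow]
    rw [← ENNReal.rpow_mul]
    congr 1
    field_simp
  -- Chebyshev for the measure of A
  set cE : ENNReal := ENNReal.ofReal c with hcEdef
  have hcE0 : cE ≠ 0 := by simp [hcEdef, hc0]
  have hcEtop : cE ≠ ⊤ := ENNReal.ofReal_ne_top
  set S := eLpNorm (fun p => deGiorgiTrunc lam (m - 1) (v p)) (ENNReal.ofReal (qStar d η)) μ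
    with hSdef
  have hTnonneg : ∀ p, 0 ≤ deGiorgiTrunc lam (m - 1) (v p) := fun p => le_max_right _ _
  have hcheb : ∀ p, f p ≤ (cE⁻¹ * (‖deGiorgiTrunc lam (m - 1) (v p)‖₊ : ENNReal)) ^ qStar d η := by
    intro p
    by_cases hp : p ∈ A
    · simp only [hfdef, Set.indicator_of_mem hp]
      have h1 : c ≤ deGiorgiTrunc lam (m - 1) (v p) := hstep _ hp
      have h2 : cE ≤ (‖deGiorgiTrunc lam (m - 1) (v p)‖₊ : ENNReal) := by
        rw [← enorm_eq_nnnorm, Real.enorm_eq_ofReal (hTnonneg p)]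
        exact ENNReal.ofReal_le_ofReal h1
      have h3 : (1 : ENNReal) ≤ cE⁻¹ * (‖deGiorgiTrunc lam (m - 1) (v p)‖₊ : ENNReal) := by
        rw [← ENNReal.inv_mul_cancel hcE0 hcEtop]
        exact mul_le_mul_right h2 _
      calc (1 : ENNReal) = 1 ^ qStar d η := (ENNReal.one_rpow _).symm
        _ ≤ _ := ENNReal.rpow_le_rpow h3 hqs0.le
    · simp [hfdef, hp]
  have hSnorm : (∫⁻ p, (‖deGiorgiTrunc lam (m - 1) (v p)‖₊ : ENNReal) ^ qStar d η ∂μ)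
      = S ^ qStar d η := by
    rw [hSdef, eLpNorm_eq_lintegral_rpow_enorm_toReal (by simp [hqs0]) (by simp),
      ENNReal.toReal_ofReal hqs0.le, ← ENNReal.rpow_mul, one_div,
      inv_mul_cancel₀ hqs0.ne', ENNReal.rpow_one]
    rfl
  have hcEinvtop : cE⁻¹ ^ qStar d η ≠ ⊤ :=
    ENNReal.rpow_ne_top_of_nonneg hqs0.le (by simp [ENNReal.inv_ne_top, hcE0])
  have hmuA : μ A ≤ (cE⁻¹ * S) ^ qStar d η := by
    calc μ A = ∫⁻ p, f p ∂μ := (lintegral_indicator_one hA).symm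
      _ ≤ ∫⁻ p, (cE⁻¹ * (‖deGiorgiTrunc lam (m - 1) (v p)‖₊ : ENNReal)) ^ qStar d η ∂μ :=
        lintegral_mono hcheb
      _ = ∫⁻ p, cE⁻¹ ^ qStar d η *
            (‖deGiorgiTrunc lam (m - 1) (v p)‖₊ : ENNReal) ^ qStar d η ∂μ := by
        simp_rw [ENNReal.mul_rpow_of_nonneg _ _ hqs0.le]
      _ = cE⁻¹ ^ qStar d η *
            ∫⁻ p, (‖deGiorgiTrunc lam (m - 1) (v p)‖₊ : ENNReal) ^ qStar d η ∂μ :=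
        lintegral_const_mul' _ _ hcEinvtop
      _ = cE⁻¹ ^ qStar d η * S ^ qStar d η := by rw [hSnorm]
      _ = (cE⁻¹ * S) ^ qStar d η := (ENNReal.mul_rpow_of_nonneg _ _ hqs0.le).symm
  have hk1k : (0 : ℝ) ≤ (k - 1) / k := by
    apply div_nonneg <;> linarith
  have hmuA2 : (μ A) ^ ((k - 1) / k) ≤ cE⁻¹ ^ e * S ^ e := by
    calc (μ A) ^ ((k - 1) / k) ≤ ((cE⁻¹ * S) ^ qStar d η) ^ ((k - 1) / k) :=
        ENNReal.rpow_le_rpow hmuA hk1k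
      _ = (cE⁻¹ * S) ^ e := by rw [← ENNReal.rpow_mul, hkey]
      _ = cE⁻¹ ^ e * S ^ e := ENNReal.mul_rpow_of_nonneg _ _ he0.le
  have hcEinv : cE⁻¹ ^ e = ENNReal.ofReal (((2 : ℝ) ^ m / lam) ^ e) := by
    have h1 : cE⁻¹ = ENNReal.ofReal ((2 : ℝ) ^ m / lam) := by
      rw [hcEdef, ← ENNReal.ofReal_inv_of_pos hc0]
      congr 1
      rw [hcdef]
      field_simp
      rw [← mul_pow]; norm_num
    rw [h1, ENNReal.ofReal_rpow_of_pos (by positivity)]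
  -- put everything together
  calc ∫⁻ p in Set.Icc (0 : ℝ) T ×ˢ O,
        (if 0 < deGiorgiTrunc lam m (v p) then ENNReal.ofReal (h p ^ 2) else 0)
      = ∫⁻ p, (f * g) p ∂μ := by rw [hμdef]; exact lintegral_congr hfg
    _ ≤ (∫⁻ p, f p ^ (k / (k - 1)) ∂μ) ^ (1 / (k / (k - 1))) * (∫⁻ p, g p ^ k ∂μ) ^ (1 / k) :=
        holder
    _ = (μ A) ^ ((k - 1) / k) * (eLpNorm h (ENNReal.ofReal (2 * k)) μ) ^ (2 : ℝ) := by
        rw [hintf, hinv, hX]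
    _ ≤ (cE⁻¹ ^ e * S ^ e) * (eLpNorm h (ENNReal.ofReal (2 * k)) μ) ^ (2 : ℝ) :=
        mul_le_mul_left hmuA2 _
    _ = ENNReal.ofReal (((2 : ℝ) ^ m / lam) ^ e) *
          (eLpNorm h (ENNReal.ofReal (2 * k)) μ) ^ (2 : ℝ) * S ^ e := by
        rw [hcEinv]; ring
end

section
/- Let d ≥ 1, η ∈ (0, 1], and let k be real with 1 + d/(2η) < k < 2 + d/η; set α₀ = (2ηk − d − 2η)/(dk), q* = 2(d + 2η)/d, and define γ by 1/γ = 1/k − dα₀/(d + 2η) (so γ ∈ [1, ∞)). Let T > 0, let 𝒪 ⊆ ℝ^d be open, and write Q = [0,T] × 𝒪 with Lebesgue measure. Let v : Q → ℝ and h : Q → [0, ∞) be measurable, λ > 0, and m ≥ 1 an integer. With T_m(v) = max(v − λ(1 − 2^{−m}), 0), the following inequality holds in [0, ∞]: ∫₀^T ( ∫_𝒪 T_m(v(s,x)) h(s,x) dx )² ds ≤ (2^m/λ)^{2+4α₀} · ( ess sup_{s∈[0,T]} ∫_𝒪 T_m(v(s,x))² dx ) · ‖h‖²_{L^{2γ}(Q)}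 · ‖T_{m−1}(v)‖_{L^{q*}(Q)}^{2+4α₀}. -/
open MeasureTheory
open scoped ENNReal

/-- `γ`, defined by `1/γ = 1/k - d α₀/(d + 2η)`. -/
noncomputable def gammaExp (d : ℕ) (η k : ℝ) : ℝ :=
  (1 / k - d * alphaZero d η k / (d + 2 * η))⁻¹

set_option maxHeartbeats 1600000 in
theorem deGiorgi_quadratic_variation_estimate (d : ℕ) (hd : 1 ≤ d)
    (η : ℝ) (hη0 : 0 < η) (hη1 : η ≤ 1)
    (k : ℝ) (hk1 : 1 + d / (2 * η) < k) (hk2 : k < 2 + d / η)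
    (T : ℝ) (hT : 0 < T) (O : Set (Fin d → ℝ)) (hO : IsOpen O)
    (v h : ℝ × (Fin d → ℝ) → ℝ) (hv : Measurable v) (hh : Measurable h)
    (hh0 : ∀ p, 0 ≤ h p)
    (lam : ℝ) (hlam : 0 < lam) (m : ℕ) (hm : 1 ≤ m) :
    ∫⁻ s in Set.Icc (0 : ℝ) T,
        (∫⁻ x in O, ENNReal.ofReal (deGiorgiTrunc lam m (v (s, x)) * h (s, x))) ^ 2 ≤
      ENNReal.ofReal (((2 : ℝ) ^ m / lam) ^ (2 + 4 * alphaZero d η k)) *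
        essSup (fun s : ℝ => ∫⁻ x in O, ENNReal.ofReal (deGiorgiTrunc lam m (v (s, x)) ^ 2))
          (volume.restrict (Set.Icc (0 : ℝ) T)) *
        (eLpNorm h (ENNReal.ofReal (2 * gammaExp d η k))
            (volume.restrict (Set.Icc (0 : ℝ) T ×ˢ O))) ^ (2 : ℝ) *
        (eLpNorm (fun p => deGiorgiTrunc lam (m - 1) (v p)) (ENNReal.ofReal (qStar d η))
            (volume.restrict (Set.Icc (0 : ℝ) T ×ˢ O))) ^ (2 + 4 * alphaZero d η k) := by
  -- ## Real-number preliminaries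
  set a := alphaZero d η k with ha_def
  have hD1 : (1:ℝ) ≤ (d:ℝ) := by exact_mod_cast hd
  have hD0 : (0:ℝ) < (d:ℝ) := by linarith
  have h2η : (0:ℝ) < 2*η := by linarith
  have hk01 : 1 < k := by
    have : 0 < (d:ℝ)/(2*η) := by positivity
    linarith
  have hk0 : 0 < k := by linarith
  have h1 : (d:ℝ) + 2*η < 2*η*k := by
    have := (div_lt_iff₀ h2η).mp (by linarith : (d:ℝ)/(2*η) < k - 1)
    nlinarith
  have h2 : 2*η*k < 2*(d:ℝ) + 4*η := by
    have := (lt_div_iff₀ hη0).mp (by linarith : k - 2 < (d:ℝ)/η)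
    nlinarith
  have hd2η : (0:ℝ) < (d:ℝ) + 2*η := by linarith
  have hDne : (d:ℝ) ≠ 0 := ne_of_gt hD0
  have hkne : k ≠ 0 := ne_of_gt hk0
  have hd2ηne : (d:ℝ) + 2*η ≠ 0 := ne_of_gt hd2η
  have ha0 : 0 < a := by
    rw [ha_def]; unfold alphaZero
    exact div_pos (by linarith) (by positivity)
  set c : ℝ := 1/k - (d:ℝ) * alphaZero d η k / ((d:ℝ) + 2*η) with hc_def
  have hcval : c = (2*(d:ℝ) + 4*η - 2*η*k) / (k*((d:ℝ)+2*η)) := by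
    rw [hc_def]; unfold alphaZero
    field_simp
    ring
  have hc0 : 0 < c := by
    rw [hcval]; exact div_pos (by linarith) (by positivity)
  have hc1 : c < 1 := by
    rw [hcval, div_lt_one (by positivity)]
    nlinarith [mul_lt_mul_of_pos_right hk01 hd2η]
  have h1c : (0:ℝ) < 1 - c := by linarith
  set γ := gammaExp d η k with hγ_def
  have hγc : γ = c⁻¹ := rfl
  have hγ1 : 1 < γ := by rw [hγc]; exact (one_lt_inv₀ hc0).mpr hc1
  have hγpos : 0 < γ := by linarith
  set γ' : ℝ := (1 - c)⁻¹ with hγ'_def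
  have hγ'pos : 0 < γ' := by rw [hγ'_def]; exact inv_pos.mpr h1c
  have hconj : γ.HolderConjugate γ' := ⟨by rw [hγc, hγ'_def, inv_inv, inv_inv]; ring, hγpos, hγ'pos⟩
  have hinvγ : 1/γ = c := by rw [hγc, one_div, inv_inv]
  have hinvγ' : 1/γ' = 1 - c := by rw [hγ'_def, one_div, inv_inv]
  have hq0 : 0 < qStar d η := by unfold qStar; positivity
  have h24a : (0:ℝ) < 2 + 4*a := by linarith
  have hkey : qStar d η * (1 - c) = 2 + 4*a := by
    rw [hcval, ha_def]; unfold qStar alphaZero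
    field_simp
    ring
  -- ## Function preliminaries
  have hTm_nonneg : ∀ (j : ℕ) (x : ℝ), 0 ≤ deGiorgiTrunc lam j x := fun j x => le_max_right _ _
  have hmeasT : ∀ j : ℕ, Measurable fun p : ℝ × (Fin d → ℝ) => deGiorgiTrunc lam j (v p) :=
    fun j => (hv.sub measurable_const).max measurable_const
  set Tm : ℝ × (Fin d → ℝ) → ℝ≥0∞ := fun p => ENNReal.ofReal (deGiorgiTrunc lam m (v p))
    with hTm_def
  set W : ℝ × (Fin d → ℝ) → ℝ≥0∞ := fun p => ENNReal.ofReal (deGiorgiTrunc lam (m-1) (v p))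
    with hW_def
  set H : ℝ × (Fin d → ℝ) → ℝ≥0∞ := fun p => ENNReal.ofReal (h p) with hH_def
  have hTmMeas : Measurable Tm := (hmeasT m).ennreal_ofReal
  have hWMeas : Measurable W := (hmeasT (m-1)).ennreal_ofReal
  have hHMeas : Measurable H := hh.ennreal_ofReal
  set A : Set (ℝ × (Fin d → ℝ)) := {p | 0 < deGiorgiTrunc lam m (v p)} with hA_def
  have hAmeas : MeasurableSet A := measurableSet_lt measurable_const (hmeasT m)
  set χ : ℝ × (Fin d → ℝ) → ℝ≥0∞ := A.indicator (fun _ => (1:ℝ≥0∞)) with hχ_def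
  have hχmeas : Measurable χ := measurable_const.indicator hAmeas
  set Q : Set (ℝ × (Fin d → ℝ)) := Set.Icc (0:ℝ) T ×ˢ O with hQ_def
  -- pointwise factorisation
  have hpt1 : ∀ p, ENNReal.ofReal (deGiorgiTrunc lam m (v p) * h p) = Tm p * (χ p * H p) := by
    intro p
    rw [ENNReal.ofReal_mul (hTm_nonneg m _)]
    by_cases hp : p ∈ A
    · rw [hχ_def]; simp [Set.indicator_of_mem hp, hTm_def, hH_def]
    · have h0 : deGiorgiTrunc lam m (v p) = 0 :=
        le_antisymm (not_lt.mp hp) (hTm_nonneg m _)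
      rw [hχ_def]
      simp [Set.indicator_of_notMem hp, hTm_def, h0]
  have hχsq : ∀ p, χ p ^ (2:ℕ) = χ p := by
    intro p
    rw [hχ_def]
    by_cases hp : p ∈ A
    · simp [Set.indicator_of_mem hp]
    · simp [Set.indicator_of_notMem hp]
  have hsq : ∀ x : ℝ≥0∞, (x ^ ((1:ℝ)/2)) ^ (2:ℕ) = x := by
    intro x
    rw [← ENNReal.rpow_natCast (x ^ ((1:ℝ)/2)) 2, ← ENNReal.rpow_mul]
    norm_num
  -- ## Step A : Cauchy-Schwarz in the space variable
  have stepA : ∀ s : ℝ,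
      (∫⁻ x in O, ENNReal.ofReal (deGiorgiTrunc lam m (v (s,x)) * h (s,x))) ^ 2 ≤
      (∫⁻ x in O, ENNReal.ofReal (deGiorgiTrunc lam m (v (s,x)) ^ 2)) *
      (∫⁻ x in O, χ (s,x) * H (s,x) ^ 2) := by
    intro s
    have hf : Measurable fun x : Fin d → ℝ => Tm (s, x) :=
      hTmMeas.comp measurable_prodMk_left
    have hg : Measurable fun x : Fin d → ℝ => χ (s, x) * H (s, x) :=
      (hχmeas.comp measurable_prodMk_left).mul (hHMeas.comp measurable_prodMk_left)
    have hcs := ENNReal.lintegral_mul_le_Lp_mul_Lq (volume.restrict O)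
      (⟨by norm_num, two_pos, two_pos⟩ : (2:ℝ).HolderConjugate 2) hf.aemeasurable hg.aemeasurable
    simp only [Pi.mul_apply] at hcs
    calc (∫⁻ x in O, ENNReal.ofReal (deGiorgiTrunc lam m (v (s,x)) * h (s,x))) ^ 2
        = (∫⁻ x in O, Tm (s,x) * (χ (s,x) * H (s,x))) ^ 2 := by
          congr 1; exact lintegral_congr fun x => hpt1 (s, x)
      _ ≤ ((∫⁻ x in O, Tm (s,x) ^ (2:ℝ)) ^ ((1:ℝ)/2)
            * (∫⁻ x in O, (χ (s,x) * H (s,x)) ^ (2:ℝ)) ^ ((1:ℝ)/2)) ^ 2 :=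
          pow_le_pow_left₀ zero_le hcs 2
      _ = (∫⁻ x in O, Tm (s,x) ^ (2:ℝ)) * (∫⁻ x in O, (χ (s,x) * H (s,x)) ^ (2:ℝ)) := by
          rw [mul_pow, hsq, hsq]
      _ = (∫⁻ x in O, ENNReal.ofReal (deGiorgiTrunc lam m (v (s,x)) ^ 2)) *
          (∫⁻ x in O, χ (s,x) * H (s,x) ^ 2) := by
          congr 1
          · refine lintegral_congr fun x => ?_
            rw [show (2:ℝ) = ((2:ℕ):ℝ) by norm_num, ENNReal.rpow_natCast,
              hTm_def, ← ENNReal.ofReal_pow (hTm_nonneg m _)]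
          · refine lintegral_congr fun x => ?_
            rw [show (2:ℝ) = ((2:ℕ):ℝ) by norm_num, ENNReal.rpow_natCast,
              mul_pow, hχsq]
  -- ## measurability of the inner integral
  have hfprodmeas : Measurable fun p : ℝ × (Fin d → ℝ) => χ p * H p ^ 2 :=
    hχmeas.mul (hHMeas.pow_const 2)
  have hGmeas : Measurable fun s : ℝ => ∫⁻ x in O, χ (s,x) * H (s,x) ^ 2 :=
    hfprodmeas.lintegral_prod_right'
  -- ## Fubini
  have hfub : ∫⁻ p in Q, χ p * H p ^ 2 =
      ∫⁻ s in Set.Icc (0:ℝ) T, ∫⁻ x in O, χ (s,x) * H (s,x) ^ 2 := by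
    rw [hQ_def, Measure.volume_eq_prod, ← Measure.prod_restrict,
      lintegral_prod _ hfprodmeas.aemeasurable]
  -- ## Hölder in space-time
  set Ih := ∫⁻ p in Q, H p ^ (2*γ) with hIh_def
  set Iw := ∫⁻ p in Q, W p ^ (qStar d η) with hIw_def
  have holder : ∫⁻ p in Q, χ p * H p ^ 2 ≤ Ih ^ (1/γ) * ((volume.restrict Q) A) ^ (1-c) := by
    have hcs := ENNReal.lintegral_mul_le_Lp_mul_Lq (volume.restrict Q) hconj
      ((hHMeas.pow_const 2).aemeasurable) hχmeas.aemeasurable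
    simp only [Pi.mul_apply] at hcs
    have e1 : ∫⁻ p in Q, (H p ^ (2:ℕ)) ^ γ = Ih := by
      rw [hIh_def]
      refine lintegral_congr fun p => ?_
      rw [← ENNReal.rpow_natCast (H p) 2, ← ENNReal.rpow_mul]
      norm_num
    have e2 : ∫⁻ p in Q, χ p ^ γ' = (volume.restrict Q) A := by
      have hpt : ∀ p, χ p ^ γ' = χ p := by
        intro p
        rw [hχ_def]
        by_cases hp : p ∈ A
        · simp [Set.indicator_of_mem hp]
        · simp [Set.indicator_of_notMem hp, ENNReal.zero_rpow_of_pos hγ'pos]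
      rw [lintegral_congr hpt, hχ_def, lintegral_indicator hAmeas, setLIntegral_one]
    calc ∫⁻ p in Q, χ p * H p ^ 2
        = ∫⁻ p in Q, H p ^ 2 * χ p := lintegral_congr fun p => mul_comm _ _
      _ ≤ (∫⁻ p in Q, (H p ^ (2:ℕ)) ^ γ) ^ (1/γ) * (∫⁻ p in Q, χ p ^ γ') ^ (1/γ') := hcs
      _ = Ih ^ (1/γ) * ((volume.restrict Q) A) ^ (1-c) := by rw [e1, e2, hinvγ']
  -- ## level-set estimate
  have hptA : ∀ p, χ p ≤ (ENNReal.ofReal ((2:ℝ)^m / lam) * W p) ^ (qStar d η) := by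
    intro p
    by_cases hp : p ∈ A
    · have hlow : lam * (1/2:ℝ)^m ≤ deGiorgiTrunc lam (m-1) (v p) := by
        obtain ⟨n, rfl⟩ : ∃ n, m = n + 1 := ⟨m-1, by omega⟩
        have hp' : 0 < max (v p - lam * (1 - (1/2:ℝ)^(n+1))) 0 := hp
        have hvp : 0 < v p - lam * (1 - (1/2:ℝ)^(n+1)) := by
          rcases lt_max_iff.mp hp' with hh' | hh'
          · exact hh'
          · exact absurd hh' (lt_irrefl 0)
        have hps : (1/2:ℝ)^(n+1) = (1/2:ℝ)^n * (1/2) := pow_succ _ _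
        have hle : lam * (1/2:ℝ)^(n+1) ≤ v p - lam * (1 - (1/2:ℝ)^n) := by
          rw [hps] at hvp ⊢; nlinarith [hvp]
        calc lam * (1/2:ℝ)^(n+1) ≤ v p - lam * (1 - (1/2:ℝ)^n) := hle
          _ ≤ deGiorgiTrunc lam n (v p) := le_max_left _ _
      have hone : (1:ℝ≥0∞) ≤ ENNReal.ofReal ((2:ℝ)^m / lam) * W p := by
        rw [hW_def, ← ENNReal.ofReal_mul (by positivity)]
        rw [show (1:ℝ≥0∞) = ENNReal.ofReal 1 by simp]
        apply ENNReal.ofReal_le_ofReal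
        have h21 : (2:ℝ)^m * (1/2:ℝ)^m = 1 := by rw [← mul_pow]; norm_num
        have hid : (2:ℝ)^m/lam * (lam * (1/2:ℝ)^m) = ((2:ℝ)^m * (1/2:ℝ)^m) * (lam/lam) := by
          ring
        calc (1:ℝ) = (2:ℝ)^m/lam * (lam * (1/2:ℝ)^m) := by
              rw [hid, div_self hlam.ne', h21, mul_one]
          _ ≤ (2:ℝ)^m/lam * deGiorgiTrunc lam (m-1) (v p) :=
              mul_le_mul_of_nonneg_left hlow (by positivity)
      calc χ p = 1 := Set.indicator_of_mem hp _
        _ = (1:ℝ≥0∞) ^ (qStar d η) := (ENNReal.one_rpow _).symm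
        _ ≤ _ := ENNReal.rpow_le_rpow hone hq0.le
    · rw [hχ_def, Set.indicator_of_notMem hp]
      exact zero_le
  have hcst : ENNReal.ofReal ((2:ℝ)^m/lam) ^ (qStar d η)
      = ENNReal.ofReal (((2:ℝ)^m/lam) ^ (qStar d η)) :=
    ENNReal.ofReal_rpow_of_pos (div_pos (by positivity) hlam)
  have hmuA : (volume.restrict Q) A ≤ ENNReal.ofReal (((2:ℝ)^m/lam) ^ (qStar d η)) * Iw := by
    have e3 : (volume.restrict Q) A = ∫⁻ p in Q, χ p := by
      rw [hχ_def, lintegral_indicator hAmeas, setLIntegral_one]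
    rw [e3]
    calc ∫⁻ p in Q, χ p
        ≤ ∫⁻ p in Q, (ENNReal.ofReal ((2:ℝ)^m / lam) * W p) ^ (qStar d η) :=
          lintegral_mono hptA
      _ = ∫⁻ p in Q, ENNReal.ofReal ((2:ℝ)^m / lam) ^ (qStar d η) * W p ^ (qStar d η) :=
          lintegral_congr fun p => ENNReal.mul_rpow_of_nonneg _ _ hq0.le
      _ = ENNReal.ofReal ((2:ℝ)^m / lam) ^ (qStar d η) * Iw :=
          lintegral_const_mul' _ _ (by rw [hcst]; exact ENNReal.ofReal_ne_top)
      _ = ENNReal.ofReal (((2:ℝ)^m/lam) ^ (qStar d η)) * Iw := by rw [hcst]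
  -- ## identifying the Lp norms
  have hLh : (eLpNorm h (ENNReal.ofReal (2 * γ)) (volume.restrict Q)) ^ (2:ℝ) = Ih ^ (1/γ) := by
    rw [eLpNorm_eq_lintegral_rpow_enorm_toReal
      (by simp only [ne_eq, ENNReal.ofReal_eq_zero, not_le]; positivity)
      ENNReal.ofReal_ne_top]
    rw [ENNReal.toReal_ofReal (by positivity)]
    rw [← ENNReal.rpow_mul]
    rw [hIh_def]
    congr 1
    · refine lintegral_congr fun p => ?_
      rw [Real.enorm_eq_ofReal (hh0 p), hH_def]
    · field_simp
  have hLw : (eLpNorm (fun p => deGiorgiTrunc lam (m - 1) (v p)) (ENNReal.ofReal (qStar d η))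
      (volume.restrict Q)) ^ (2 + 4*a) = Iw ^ (1-c) := by
    rw [eLpNorm_eq_lintegral_rpow_enorm_toReal
      (by simp only [ne_eq, ENNReal.ofReal_eq_zero, not_le]; exact hq0)
      ENNReal.ofReal_ne_top]
    rw [ENNReal.toReal_ofReal hq0.le]
    rw [← ENNReal.rpow_mul]
    rw [hIw_def]
    congr 1
    · refine lintegral_congr fun p => ?_
      rw [Real.enorm_eq_ofReal (hTm_nonneg (m-1) _), hW_def]
    · rw [← hkey, one_div, inv_mul_cancel_left₀ hq0.ne']
  have hsplit : (ENNReal.ofReal (((2:ℝ)^m/lam) ^ (qStar d η)) * Iw) ^ (1-c)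
      = ENNReal.ofReal (((2:ℝ)^m/lam) ^ (2+4*a)) * Iw ^ (1-c) := by
    rw [ENNReal.mul_rpow_of_nonneg _ _ h1c.le, ← hcst, ← ENNReal.rpow_mul, hkey,
      ENNReal.ofReal_rpow_of_pos (div_pos (by positivity) hlam)]
  -- ## assembling
  set essF := essSup (fun s : ℝ => ∫⁻ x in O, ENNReal.ofReal (deGiorgiTrunc lam m (v (s, x)) ^ 2))
    (volume.restrict (Set.Icc (0 : ℝ) T)) with hessF_def
  calc ∫⁻ s in Set.Icc (0 : ℝ) T,
        (∫⁻ x in O, ENNReal.ofReal (deGiorgiTrunc lam m (v (s, x)) * h (s, x))) ^ 2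
      ≤ ∫⁻ s in Set.Icc (0 : ℝ) T,
          (∫⁻ x in O, ENNReal.ofReal (deGiorgiTrunc lam m (v (s,x)) ^ 2)) *
          (∫⁻ x in O, χ (s,x) * H (s,x) ^ 2) := lintegral_mono fun s => stepA s
    _ ≤ ∫⁻ s in Set.Icc (0 : ℝ) T, essF * (∫⁻ x in O, χ (s,x) * H (s,x) ^ 2) := by
        refine lintegral_mono_ae ?_
        filter_upwards [ENNReal.ae_le_essSup
          (fun s : ℝ => ∫⁻ x in O, ENNReal.ofReal (deGiorgiTrunc lam m (v (s, x)) ^ 2))] with s hs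
        exact mul_le_mul_left hs _
    _ = essF * ∫⁻ s in Set.Icc (0 : ℝ) T, ∫⁻ x in O, χ (s,x) * H (s,x) ^ 2 :=
        lintegral_const_mul _ hGmeas
    _ = essF * ∫⁻ p in Q, χ p * H p ^ 2 := by rw [hfub]
    _ ≤ essF * (Ih ^ (1/γ) * ((volume.restrict Q) A) ^ (1-c)) := mul_le_mul_right holder _
    _ ≤ essF * (Ih ^ (1/γ) *
          (ENNReal.ofReal (((2:ℝ)^m/lam) ^ (qStar d η)) * Iw) ^ (1-c)) :=
        mul_le_mul_right (mul_le_mul_right (ENNReal.rpow_le_rpow hmuA h1c.le) _) _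
    _ = ENNReal.ofReal (((2 : ℝ) ^ m / lam) ^ (2 + 4 * a)) * essF *
        (eLpNorm h (ENNReal.ofReal (2 * γ)) (volume.restrict Q)) ^ (2:ℝ) *
        (eLpNorm (fun p => deGiorgiTrunc lam (m - 1) (v p)) (ENNReal.ofReal (qStar d η))
          (volume.restrict Q)) ^ (2 + 4 * a) := by
        rw [hsplit, hLh, hLw]; ring
end
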